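/- arXiv:2406.02330 — 2 statements merged into one kernel-verified Lean document; each statement's English description precedes it below -/
import Mathlib

section
/- (Caradus) Let H be an infinite-dimensional separable complex Hilbert space and T a bounded linear operator on H such that ker T is infinite-dimensional and T is surjective. Then T is universal: for every bounded linear operator S on H there exist λ ∈ ℂ, a closed T-invariant subspace M, and a continuous linear isomorphism Φ : H → M with Φ ∘ S = λ • (T|_M) ∘ Φ. -/
/-!
Let `B` be a bounded right inverse of `T` (it exists because `ker T` is complemented) and, using
separability of `H`, let `J : H → ker T` be an isometry. For `a ≠ 0` small enough, the equation
`Φ = J + a B Φ S` has a bounded solution `Φ = ∑ aⁿ Bⁿ J Sⁿ`. Since `T B = 1` and `T J = 0`, it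
satisfies `T Φ = a Φ S` and `(1 - B T) Φ = J`, so `Φ` is bounded below. Hence `M = range Φ` is
closed and `T`-invariant, and `Φ : H ≃ M` conjugates `S` to `a⁻¹ T|_M`.
-/

open Function ContinuousLinearMap TopologicalSpace Metric

section Banach

variable {𝕜 E F : Type*} [NontriviallyNormedField 𝕜]
  [NormedAddCommGroup E] [NormedSpace 𝕜 E] [NormedAddCommGroup F] [NormedSpace 𝕜 F]

theorem ContinuousLinearMap.HasRightInverse.of_surjective_of_closedComplemented_ker
    [CompleteSpace E] [CompleteSpace F] {T : E →L[𝕜] F} (hT : Surjective T)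
    (hK : T.ker.ClosedComplemented) : T.HasRightInverse := by
  obtain ⟨P, hP⟩ := hK
  have : CompleteSpace T.ker := T.isClosed_ker.completeSpace_coe
  let e := T.equivProdOfSurjectiveOfIsCompl P (T.range_eq_top_of_surjective hT)
    (LinearMap.range_eq_top_of_surjective _ fun x ↦ ⟨x, hP x⟩)
    (LinearMap.isCompl_of_proj (f := (P : E →ₗ[𝕜] T.ker)) hP)
  refine ⟨(e.symm : F × T.ker →L[𝕜] E) ∘L inl 𝕜 F T.ker, fun y ↦ ?_⟩
  exact congrArg Prod.fst (e.apply_symm_apply (y, 0))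

theorem ContinuousLinearMap.exists_eq_add_smul_comp_comp [CompleteSpace E] (J : F →L[𝕜] E)
    (B : E →L[𝕜] E) (S : F →L[𝕜] F) {a : 𝕜} (ha : ‖a‖ * ‖B‖ * ‖S‖ < 1) :
    ∃ Φ : F →L[𝕜] E, Φ = J + a • (B ∘L Φ ∘L S) := by
  have hf : ContractingWith (‖a‖₊ * ‖B‖₊ * ‖S‖₊) fun Φ : F →L[𝕜] E ↦ J + a • (B ∘L Φ ∘L S) := by
    refine ⟨by simpa [← NNReal.coe_lt_coe] using ha, LipschitzWith.of_dist_le_mul fun Φ Ψ ↦ ?_⟩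
    rw [dist_eq_norm, dist_eq_norm, add_sub_add_left_eq_sub, ← smul_sub, ← comp_sub, ← sub_comp]
    calc ‖a • (B ∘L (Φ - Ψ) ∘L S)‖ ≤ ‖a‖ * (‖B‖ * (‖Φ - Ψ‖ * ‖S‖)) := by
          rw [norm_smul]; gcongr; grw [opNorm_comp_le, opNorm_comp_le]
      _ = _ := by push_cast; ring
  exact ⟨_, hf.fixedPoint_isFixedPt.symm⟩

theorem ContinuousLinearMap.HasRightInverse.exists_hasLeftInverse_comp_eq_smul_comp
    [CompleteSpace E] {T : E →L[𝕜] E} (hT : T.HasRightInverse) {J : F →L[𝕜] E}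
    (hJ : J.HasLeftInverse) (hTJ : T ∘L J = 0) (S : F →L[𝕜] F) :
    ∃ a : 𝕜, a ≠ 0 ∧ ∃ Φ : F →L[𝕜] E, Φ.HasLeftInverse ∧ T ∘L Φ = a • Φ ∘L S := by
  obtain ⟨B, hTB⟩ := hT
  obtain ⟨a, ha₀, ha⟩ := NormedField.exists_norm_lt 𝕜 (by positivity : 0 < 1 / (‖B‖ * ‖S‖ + 1))
  have hsmall : ‖a‖ * ‖B‖ * ‖S‖ < 1 := by
    rw [lt_div_iff₀ (by positivity)] at ha
    nlinarith
  obtain ⟨Φ, hΦ⟩ := exists_eq_add_smul_comp_comp J B S hsmall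
  have hTΦ : T ∘L Φ = a • Φ ∘L S := by
    ext x
    conv_lhs => rw [hΦ]
    simpa [hTB _] using congr($hTJ x)
  have hJΦ : (ContinuousLinearMap.id 𝕜 E - B ∘L T) ∘L Φ = J := by
    ext x
    have hΦx : Φ x = J x + a • B (Φ (S x)) := congr($hΦ x)
    have hTΦx : T (Φ x) = a • Φ (S x) := congr($hTΦ x)
    simp only [comp_apply, sub_apply, coe_id', id_eq, hTΦx, map_smul]
    rw [hΦx, add_sub_cancel_right]
  exact ⟨a, norm_pos_iff.1 ha₀, Φ, (hJ.congr hJΦ).of_comp, hTΦ⟩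

theorem ContinuousLinearMap.HasLeftInverse.exists_equiv_range {Φ : F →L[𝕜] E}
    (hΦ : Φ.HasLeftInverse) : ∃ Ψ : F ≃L[𝕜] Φ.range, ∀ x, (Ψ x : E) = Φ x := by
  obtain ⟨L, hL⟩ := hΦ
  refine ⟨.equivOfInverse Φ.rangeRestrict (L ∘L Φ.range.subtypeL) hL ?_, fun _ ↦ rfl⟩
  rintro ⟨_, x, rfl⟩
  ext
  simp [hL x]

theorem ContinuousLinearMap.exists_similar_smul_restrict_of_comp_eq_smul_comp (T : E →L[𝕜] E)
    {S : F →L[𝕜] F} {Φ : F →L[𝕜] E} (hΦ : Φ.HasLeftInverse) {a : 𝕜} (ha : a ≠ 0)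
    (hTΦ : T ∘L Φ = a • Φ ∘L S) :
    ∃ (lam : 𝕜) (M : Submodule 𝕜 E), IsClosed (M : Set E) ∧ (∀ x ∈ M, T x ∈ M) ∧
      ∃ Ψ : F ≃L[𝕜] M, ∀ x, (Ψ (S x) : E) = lam • T (Ψ x) := by
  have hTΦx (x : F) : T (Φ x) = a • Φ (S x) := congr($hTΦ x)
  obtain ⟨Ψ, hΨ⟩ := hΦ.exists_equiv_range
  refine ⟨a⁻¹, Φ.range, hΦ.isClosed_range, ?_, Ψ, fun x ↦ ?_⟩
  · rintro _ ⟨x, rfl⟩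
    exact ⟨a • S x, by simp [hTΦx]⟩
  · rw [hΨ, hΨ, hTΦx, inv_smul_smul₀ ha]

end Banach

section Hilbert

variable {𝕜 E F : Type*} [RCLike 𝕜] [NormedAddCommGroup E] [InnerProductSpace 𝕜 E]
  [NormedAddCommGroup F] [InnerProductSpace 𝕜 F]

theorem Orthonormal.countable [SeparableSpace E] {ι : Type*} {v : ι → E} (hv : Orthonormal 𝕜 v) :
    Countable ι := by
  refine Pairwise.countable_of_isOpen_disjoint (s := fun i ↦ ball (v i) (1 / 2))
    (fun i j hij ↦ ball_disjoint_ball ?_) (fun _ ↦ isOpen_ball)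
    (fun _ ↦ nonempty_ball.2 one_half_pos)
  have hsq : dist (v i) (v j) ^ 2 = 2 := by
    rw [dist_eq_norm, @norm_sub_sq 𝕜, hv.inner_eq_zero hij, hv.1 i, hv.1 j]
    norm_num
  nlinarith [dist_nonneg (x := v i) (y := v j)]

theorem HilbertBasis.infinite_of_not_finiteDimensional {ι : Type*} (b : HilbertBasis ι 𝕜 E)
    (h : ¬FiniteDimensional 𝕜 E) : Infinite ι := by
  by_contra hι
  have : Fintype ι := @Fintype.ofFinite ι (not_infinite_iff_finite.1 hι)
  exact h (.of_basis b.toOrthonormalBasis.toBasis)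

theorem exists_linearIsometry_of_separableSpace [CompleteSpace E] [SeparableSpace E]
    [CompleteSpace F] (hF : ¬FiniteDimensional 𝕜 F) : Nonempty (E →ₗᵢ[𝕜] F) := by
  obtain ⟨w, b, -⟩ := exists_hilbertBasis 𝕜 E
  obtain ⟨w', b', -⟩ := exists_hilbertBasis 𝕜 F
  have := b.orthonormal.countable
  have := b'.infinite_of_not_finiteDimensional hF
  obtain ⟨f, hf⟩ := exists_injective_nat w
  have hu : Orthonormal 𝕜 (b' ∘ Infinite.natEmbedding w' ∘ f) :=
    b'.orthonormal.comp _ ((Infinite.natEmbedding w').injective.comp hf)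
  exact ⟨hu.orthogonalFamily.linearIsometry.comp b.repr.toLinearIsometry⟩

theorem Submodule.closedComplemented_of_hasOrthogonalProjection (K : Submodule 𝕜 E)
    [K.HasOrthogonalProjection] : K.ClosedComplemented :=
  ⟨K.orthogonalProjectionOnto, K.orthogonalProjectionOnto_mem_subspace_eq_self⟩

theorem ContinuousLinearMap.HasLeftInverse.of_isometry [CompleteSpace E] [CompleteSpace F]
    {u : E →L[𝕜] F} (hu : Isometry u) : u.HasLeftInverse :=
  ⟨adjoint u, fun x ↦ congr($((isometry_iff_adjoint_comp_self u).1 hu) x)⟩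

end Hilbert

theorem caradus_universal_general
    (H : Type*) [NormedAddCommGroup H] [InnerProductSpace ℂ H] [CompleteSpace H]
    [TopologicalSpace.SeparableSpace H]
    (T : H →L[ℂ] H)
    (hker : ¬ FiniteDimensional ℂ (LinearMap.ker (T : H →ₗ[ℂ] H)))
    (hsurj : Function.Surjective T) :
    ∀ S : H →L[ℂ] H, ∃ (lam : ℂ) (M : Submodule ℂ H),
      IsClosed (M : Set H) ∧ (∀ x ∈ M, T x ∈ M) ∧
      ∃ Φ : H ≃L[ℂ] M, ∀ x : H, (Φ (S x) : H) = lam • T ((Φ x : H)) := by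
  intro S
  have : CompleteSpace T.ker := T.isClosed_ker.completeSpace_coe
  obtain ⟨J⟩ := exists_linearIsometry_of_separableSpace (E := H) (F := T.ker) hker
  have hT : T.HasRightInverse := .of_surjective_of_closedComplemented_ker hsurj
    T.ker.closedComplemented_of_hasOrthogonalProjection
  obtain ⟨a, ha, Φ, hΦ, hTΦ⟩ := hT.exists_hasLeftInverse_comp_eq_smul_comp
    (J := (T.ker.subtypeₗᵢ.comp J).toContinuousLinearMap) (.of_isometry (LinearIsometry.isometry _))
    (by ext x; exact (J x).2) S
  exact T.exists_similar_smul_restrict_of_comp_eq_smul_comp hΦ ha hTΦ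

/-- **Caradus' theorem.** If `T` is a surjective bounded operator on an
infinite-dimensional separable complex Hilbert space `H` whose kernel is
infinite-dimensional, then `T` is universal: every bounded operator `S` on `H`
is similar to a scalar multiple of the restriction of `T` to a closed
`T`-invariant subspace. -/
theorem caradus_universal
    (H : Type*) [NormedAddCommGroup H] [InnerProductSpace ℂ H] [CompleteSpace H]
    [TopologicalSpace.SeparableSpace H] (hinf : ¬ FiniteDimensional ℂ H)
    (T : H →L[ℂ] H)
    (hker : ¬ FiniteDimensional ℂ (LinearMap.ker (T : H →ₗ[ℂ] H)))
    (hsurj : Function.Surjective T) :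
    ∀ S : H →L[ℂ] H, ∃ (lam : ℂ) (M : Submodule ℂ H),
      IsClosed (M : Set H) ∧ (∀ x ∈ M, T x ∈ M) ∧
      ∃ Φ : H ≃L[ℂ] M, ∀ x : H, (Φ (S x) : H) = lam • T ((Φ x : H)) :=
  caradus_universal_general H T hker hsurj
end

section
/- Let ψ be a hyperbolic automorphism of 𝔻 with attractive fixed point a and repulsive fixed point b, and u a bounded holomorphic function on 𝔻 bounded away from zero. Define u_n = ∏_{j=0}^{n−1} u∘ψ_j where ψ_j is the j-th iterate of ψ. Then lim_{n→∞} (sup_{z∈𝔻} |u_n(z)|)^{1/n} ≤ max{A⁺, B⁺}, where A⁺ = limsup_{z→a} |u(z)| and B⁺ = limsup_{z→b} |u(z)|. -/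
open Complex Filter Metric Set

noncomputable section

/-- A hyperbolic automorphism of the open unit disc `𝔻`, with attractive fixed
point `a` and repulsive fixed point `b` on the unit circle, and (real) derivative
values `da = ψ'(a) ∈ (0,1)`, `db = ψ'(b) ∈ (1,∞)` with `da * db = 1`. -/
structure HypAuto where
  ψ : ℂ → ℂ
  a : ℂ
  b : ℂ
  da : ℝ
  db : ℝ
  ha : ‖a‖ = 1
  hb : ‖b‖ = 1
  hab : a ≠ b
  holo : ∃ R > 1, DifferentiableOn ℂ ψ (ball (0:ℂ) R)
  bij : BijOn ψ (ball (0:ℂ) 1) (ball (0:ℂ) 1)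
  noFix : ∀ z ∈ ball (0:ℂ) 1, ψ z ≠ z
  fixa : ψ a = a
  fixb : ψ b = b
  hda : deriv ψ a = (da : ℂ)
  hdb : deriv ψ b = (db : ℂ)
  hda1 : 0 < da ∧ da < 1
  hdb1 : 1 < db
  hmulder : da * db = 1
  attract : ∀ z ∈ ball (0:ℂ) 1, Tendsto (fun n => ψ^[n] z) atTop (nhds a)

open Function Topology ComplexConjugate
open scoped Finset

/-! The automorphism `ψ` is a Möbius map `z ↦ φ_w (C z)`: move `ψ 0` to `0` and apply the Schwarz
lemma to the result and to its inverse. Since `a` and `b` are fixed, `ψ` multiplies the ratio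
`|z - a| / |z - b|` by a constant `s`, and `s < 1` because orbits tend to `a`. Outside fixed
neighbourhoods of `a` and `b` this ratio stays in a compact subinterval of `(0, ∞)`, so every orbit
spends a uniformly bounded number `m` of steps there. Hence
`sup_𝔻 |u_n| ≤ K (max(A⁺, B⁺) + ε) ^ n` with `K` independent of `n`, while the limit of
`(sup_𝔻 |u_n|) ^ (1 / n)` exists by Fekete's lemma, the sup norms being submultiplicative. -/

theorem Set.InjOn.not_eventually_eq {α β : Type*} [TopologicalSpace α] {f : α → β} {U : Set α}
    {x : α} [(𝓝[≠] x).NeBot] (hinj : InjOn f U) (hU : U ∈ 𝓝 x) :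
    ¬ ∀ᶠ y in 𝓝 x, f y = f x := by
  intro h
  obtain ⟨y, ⟨hfy, hyU⟩, hyx⟩ :=
    (eventually_nhdsWithin_of_eventually_nhds (h.and hU) |>.and
      (self_mem_nhdsWithin (s := {x}ᶜ))).exists
  exact hyx (hinj hyU (mem_of_mem_nhds hU) hfy)

theorem eventually_eq_of_deriv_eventuallyEq_zero {𝕜 G : Type*} [RCLike 𝕜] [NormedAddCommGroup G]
    [NormedSpace 𝕜 G] {f : 𝕜 → G} {x : 𝕜} (hf : ∀ᶠ y in 𝓝 x, DifferentiableAt 𝕜 f y)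
    (h : deriv f =ᶠ[𝓝 x] 0) : ∀ᶠ y in 𝓝 x, f y = f x := by
  obtain ⟨r, hr, hball⟩ := Metric.eventually_nhds_iff_ball.1 (hf.and h)
  filter_upwards [ball_mem_nhds x hr] with y hy
  exact isOpen_ball.is_const_of_deriv_eq_zero (convex_ball x r).isPreconnected
    (fun z hz => (hball z hz).1.differentiableWithinAt) (fun z hz => (hball z hz).2) hy
    (mem_ball_self hr)

/-- The inverse is continuous by the open mapping theorem and differentiable, by the inverse
function theorem, off the isolated zeros of `f'`; these singularities are removable. -/
theorem differentiableAt_of_leftInvOn {f g : ℂ → ℂ} {U : Set ℂ} (hU : IsOpen U)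
    (hf : DifferentiableOn ℂ f U) (hinj : InjOn f U) (hg : LeftInvOn g f U) {x : ℂ}
    (hx : x ∈ U) : DifferentiableAt ℂ g (f x) := by
  have hA : ∀ y ∈ U, AnalyticAt ℂ f y := fun y hy => hf.analyticAt (hU.mem_nhds hy)
  have hnc := hinj.not_eventually_eq (hU.mem_nhds hx)
  have hopen : 𝓝 (f x) ≤ map f (𝓝 x) :=
    (hA x hx).eventually_constant_or_nhds_le_map_nhds_aux.resolve_left hnc
  have hcont : ContinuousAt g (f x) := by
    rw [ContinuousAt, hg hx]
    refine (tendsto_map'_iff.2 (tendsto_id.congr' ?_)).mono_left hopen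
    filter_upwards [hU.mem_nhds hx] with y hy using (hg hy).symm
  have hderiv : ∀ᶠ y in 𝓝[≠] x, deriv f y ≠ 0 :=
    (hA x hx).deriv.eventually_eq_zero_or_eventually_ne_zero.resolve_left fun h =>
      hnc (eventually_eq_of_deriv_eventuallyEq_zero
        ((hU.eventually_mem hx).mono fun y hy => (hA y hy).differentiableAt) h)
  have hpunct : ∀ᶠ w in 𝓝[≠] (f x), DifferentiableAt ℂ g w := by
    rw [eventually_nhdsWithin_iff] at hderiv ⊢
    filter_upwards [hopen (image_mem_map (Filter.inter_mem (hU.mem_nhds hx) hderiv))]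
    rintro _ ⟨y, ⟨hyU, hy⟩, rfl⟩ hne
    have hyx : y ≠ x := by rintro rfl; exact hne rfl
    exact ((hA y hyU).hasStrictDerivAt.to_local_left_inverse (hy hyx)
      (Filter.mem_of_superset (hU.mem_nhds hyU) fun z hz => hg hz)).hasDerivAt.differentiableAt
  exact (analyticAt_of_differentiable_on_punctured_nhds_of_continuousAt hpunct
    hcont).differentiableAt

def moebiusInvolution (w z : ℂ) : ℂ := (w - z) / (1 - conj w * z)

section Moebius

variable {w z : ℂ}

theorem one_sub_conj_mul_ne_zero (hw : ‖w‖ < 1) (hz : ‖z‖ ≤ 1) : 1 - conj w * z ≠ 0 := by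
  rw [sub_ne_zero]
  refine fun h => (?_ : ‖conj w * z‖ < 1).ne' (by rw [← h, norm_one])
  rw [norm_mul, norm_conj]
  nlinarith [norm_nonneg w, norm_nonneg z]

@[simp]
theorem moebiusInvolution_self : moebiusInvolution w w = 0 := by
  simp [moebiusInvolution]

theorem differentiableAt_moebiusInvolution (hw : ‖w‖ < 1) (hz : ‖z‖ ≤ 1) :
    DifferentiableAt ℂ (moebiusInvolution w) z :=
  ((differentiableAt_const w).sub differentiableAt_id).div
    ((differentiableAt_const 1).sub ((differentiableAt_const _).mul differentiableAt_id))
    (one_sub_conj_mul_ne_zero hw hz)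

/-- `1 - |φ_w z|² = (1 - |w|²)(1 - |z|²) / |1 - w̄ z|²` with denominators cleared. -/
theorem normSq_one_sub_conj_mul_sub_normSq_sub :
    normSq (1 - conj w * z) - normSq (w - z) = (1 - normSq w) * (1 - normSq z) := by
  simp only [normSq_apply, sub_re, sub_im, mul_re, mul_im, conj_re, conj_im, one_re, one_im]
  ring

theorem norm_moebiusInvolution_lt_one (hw : ‖w‖ < 1) (hz : ‖z‖ < 1) :
    ‖moebiusInvolution w z‖ < 1 := by
  rw [moebiusInvolution, norm_div, div_lt_one (norm_pos_iff.2 (one_sub_conj_mul_ne_zero hw hz.le)),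
    ← sq_lt_sq₀ (norm_nonneg _) (norm_nonneg _), Complex.sq_norm, Complex.sq_norm,
    ← sub_pos, normSq_one_sub_conj_mul_sub_normSq_sub, ← Complex.sq_norm, ← Complex.sq_norm]
  have := (sq_lt_one_iff₀ (norm_nonneg w)).2 hw
  have := (sq_lt_one_iff₀ (norm_nonneg z)).2 hz
  nlinarith

theorem mapsTo_moebiusInvolution (hw : ‖w‖ < 1) :
    MapsTo (moebiusInvolution w) (ball 0 1) (ball 0 1) := fun z hz => by
  rw [mem_ball_zero_iff] at hz ⊢
  exact norm_moebiusInvolution_lt_one hw hz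

theorem moebiusInvolution_moebiusInvolution (hw : ‖w‖ < 1) (hz : ‖z‖ < 1) :
    moebiusInvolution w (moebiusInvolution w z) = z := by
  have hD := one_sub_conj_mul_ne_zero hw hz.le
  have hD' := one_sub_conj_mul_ne_zero hw (norm_moebiusInvolution_lt_one hw hz).le
  unfold moebiusInvolution at hD' ⊢
  field_simp at hD' ⊢
  rw [div_eq_iff (div_ne_zero_iff.1 hD').1]
  ring

end Moebius

/-- The Schwarz lemma for `g` and for `k` gives `‖g z‖ = ‖z‖`, its equality case. -/
theorem exists_eqOn_mul_of_leftInvOn_ball {g k : ℂ → ℂ}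
    (hg : DifferentiableOn ℂ g (ball 0 1)) (hk : DifferentiableOn ℂ k (ball 0 1))
    (hgm : MapsTo g (ball 0 1) (ball 0 1)) (hkm : MapsTo k (ball 0 1) (ball 0 1))
    (hg0 : g 0 = 0) (hkg : LeftInvOn k g (ball 0 1)) :
    ∃ C : ℂ, ‖C‖ = 1 ∧ EqOn g (C * ·) (ball 0 1) := by
  have hk0 : k 0 = 0 := by simpa [hg0] using hkg (mem_ball_self one_pos)
  have hhalf : (1 / 2 : ℂ) ∈ ball 0 1 := by rw [mem_ball_zero_iff]; norm_num
  have hle : ‖g (1 / 2)‖ ≤ ‖(1 / 2 : ℂ)‖ := Complex.norm_le_norm_of_mapsTo_ball hg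
    (hgm.mono_right ball_subset_closedBall) hg0 (mem_ball_zero_iff.1 hhalf)
  have hge : ‖(1 / 2 : ℂ)‖ ≤ ‖g (1 / 2)‖ := by
    have := Complex.norm_le_norm_of_mapsTo_ball hk
      (hkm.mono_right ball_subset_closedBall) hk0 (mem_ball_zero_iff.1 (hgm hhalf))
    rwa [hkg hhalf] at this
  have hC : ‖dslope g 0 (1 / 2)‖ = 1 / 1 := by
    rw [dslope_of_ne g (by norm_num), slope_def_field, hg0, sub_zero, sub_zero, norm_div,
      le_antisymm hle hge, div_self (by norm_num), div_one]
  refine ⟨_, by simpa using hC, fun z hz => ?_⟩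
  have := Complex.affine_of_mapsTo_ball_of_norm_dslope_eq_div hg
    (by simpa [hg0] using hgm.mono_right ball_subset_closedBall) hhalf hC hz
  simpa [hg0, mul_comm] using this

theorem exists_eqOn_moebiusInvolution_of_bijOn {f : ℂ → ℂ}
    (hf : DifferentiableOn ℂ f (ball 0 1)) (hbij : BijOn f (ball 0 1) (ball 0 1)) :
    ∃ C w : ℂ, ‖C‖ = 1 ∧ ‖w‖ < 1 ∧ EqOn f (fun z => moebiusInvolution w (C * z)) (ball 0 1) := by
  set w := f 0
  have hw : ‖w‖ < 1 := mem_ball_zero_iff.1 (hbij.mapsTo (mem_ball_self one_pos))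
  have hφ : DifferentiableOn ℂ (moebiusInvolution w) (ball 0 1) := fun z hz =>
    (differentiableAt_moebiusInvolution hw (mem_ball_zero_iff.1 hz).le).differentiableWithinAt
  set χ := invFunOn f (ball 0 1)
  have hχ : InvOn χ f (ball 0 1) (ball 0 1) := hbij.invOn_invFunOn
  have hχd : DifferentiableOn ℂ χ (ball 0 1) := by
    intro y hy
    obtain ⟨x, hx, rfl⟩ := hbij.surjOn hy
    exact (differentiableAt_of_leftInvOn isOpen_ball hf hbij.injOn hχ.1 hx)
      |>.differentiableWithinAt
  obtain ⟨C, hC, hgC⟩ := exists_eqOn_mul_of_leftInvOn_ball (g := moebiusInvolution w ∘ f)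
    (k := χ ∘ moebiusInvolution w) (hφ.comp hf hbij.mapsTo)
    (hχd.comp hφ (mapsTo_moebiusInvolution hw))
    ((mapsTo_moebiusInvolution hw).comp hbij.mapsTo)
    (hbij.surjOn.mapsTo_invFunOn.comp (mapsTo_moebiusInvolution hw)) moebiusInvolution_self
    fun z hz => by
      simp only [comp_apply, moebiusInvolution_moebiusInvolution hw
        (mem_ball_zero_iff.1 (hbij.mapsTo hz)), hχ.1 hz]
  refine ⟨C, w, hC, hw, fun z hz => ?_⟩
  have := congrArg (moebiusInvolution w) (hgC hz)
  rwa [comp_apply, moebiusInvolution_moebiusInvolution hw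
    (mem_ball_zero_iff.1 (hbij.mapsTo hz))] at this

theorem moebiusInvolution_mul_sub_mul_eq {w C e z : ℂ} (hw : ‖w‖ < 1) (hCe : ‖C * e‖ ≤ 1)
    (hCz : ‖C * z‖ ≤ 1) (he : moebiusInvolution w (C * e) = e) :
    (moebiusInvolution w (C * z) - e) * (1 - conj w * (C * z)) =
      C * (e * conj w - 1) * (z - e) := by
  unfold moebiusInvolution at he ⊢
  rw [div_eq_iff (one_sub_conj_mul_ne_zero hw hCe)] at he
  rw [sub_mul, div_mul_cancel₀ _ (one_sub_conj_mul_ne_zero hw hCz)]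
  linear_combination he

namespace HypAuto

variable (h : HypAuto)

theorem exists_eqOn_moebiusInvolution :
    ∃ C w : ℂ, ‖C‖ = 1 ∧ ‖w‖ < 1 ∧
      EqOn h.ψ (fun z => moebiusInvolution w (C * z)) (closedBall 0 1) := by
  obtain ⟨R, hR, hψ⟩ := h.holo
  obtain ⟨C, w, hC, hw, hEq⟩ := exists_eqOn_moebiusInvolution_of_bijOn
    (hψ.mono (ball_subset_ball hR.le)) h.bij
  refine ⟨C, w, hC, hw, hEq.of_subset_closure ?_ ?_ ball_subset_closedBall
    (closure_ball 0 one_ne_zero).ge⟩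
  · exact hψ.continuousOn.mono (closedBall_subset_ball hR)
  · intro z hz
    rw [mem_closedBall_zero_iff] at hz
    exact ((differentiableAt_moebiusInvolution hw (by rwa [norm_mul, hC, one_mul])).comp z
      (differentiableAt_id.const_mul C)).continuousAt.continuousWithinAt

def distRatio (z : ℂ) : ℝ := ‖z - h.a‖ / ‖z - h.b‖

theorem exists_distRatio_map_eq :
    ∃ s : ℝ, 0 ≤ s ∧ ∀ z ∈ ball 0 1, h.distRatio (h.ψ z) = s * h.distRatio z := by
  obtain ⟨C, w, hC, hw, hEq⟩ := h.exists_eqOn_moebiusInvolution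
  have hnorm : ∀ {z : ℂ}, ‖z‖ ≤ 1 → ‖C * z‖ ≤ 1 := fun hz => by rwa [norm_mul, hC, one_mul]
  have key : ∀ {e : ℂ}, ‖e‖ = 1 → h.ψ e = e → ∀ z ∈ ball (0 : ℂ) 1,
      ‖h.ψ z - e‖ * ‖1 - conj w * (C * z)‖ = ‖e * conj w - 1‖ * ‖z - e‖ := by
    intro e he hfix z hz
    have hz' := (mem_ball_zero_iff.1 hz).le
    rw [hEq (ball_subset_closedBall hz), ← norm_mul, moebiusInvolution_mul_sub_mul_eq hw
      (hnorm he.le) (hnorm hz') ((hEq (by simp [he])).symm.trans hfix), norm_mul, norm_mul, hC,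
      one_mul]
  refine ⟨‖h.a * conj w - 1‖ / ‖h.b * conj w - 1‖, by positivity, fun z hz => ?_⟩
  have hD : ‖1 - conj w * (C * z)‖ ≠ 0 :=
    norm_ne_zero_iff.2 (one_sub_conj_mul_ne_zero hw (hnorm (mem_ball_zero_iff.1 hz).le))
  rw [distRatio, distRatio, ← mul_div_mul_right _ _ hD, key h.ha h.fixa z hz,
    key h.hb h.fixb z hz, mul_div_mul_comm]

end HypAuto

theorem exists_card_le_of_pow_mul_mem_Icc {s α β : ℝ} (hs0 : 0 ≤ s) (hs1 : s < 1) (hα : 0 < α) :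
    ∃ m : ℕ, ∀ (r : ℝ) (S : Finset ℕ), (∀ j ∈ S, s ^ j * r ∈ Icc α β) → S.card ≤ m := by
  obtain ⟨m, hm⟩ := ((tendsto_pow_atTop_nhds_zero_of_lt_one hs0 hs1).mul_const β
    |>.eventually (gt_mem_nhds (by rwa [zero_mul]))).exists
  refine ⟨m, fun r S hS => ?_⟩
  rcases S.eq_empty_or_nonempty with rfl | hne
  · simp
  -- once `s ^ j * r` has entered `Icc α β`, it leaves it for good after `m` more steps
  have hsub : S ⊆ Finset.Ico (S.min' hne) (S.min' hne + m) := by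
    intro j hj
    have hj₀ := S.min'_le j hj
    refine Finset.mem_Ico.2 ⟨hj₀, not_le.1 fun hjm => ?_⟩
    have h₀ := hS _ (S.min'_mem hne)
    have hj := (hS _ hj).1
    rw [← Nat.sub_add_cancel hj₀, pow_add, mul_assoc] at hj
    have : s ^ (j - S.min' hne) * (s ^ S.min' hne * r) ≤ s ^ m * β :=
      mul_le_mul (pow_le_pow_of_le_one hs0 hs1.le (by omega)) h₀.2 (hα.le.trans h₀.1)
        (pow_nonneg hs0 m)
    linarith
  simpa using Finset.card_le_card hsub

namespace HypAuto

variable (h : HypAuto)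

theorem distRatio_iterate {s : ℝ} (hs : ∀ z ∈ ball 0 1, h.distRatio (h.ψ z) = s * h.distRatio z)
    {z : ℂ} (hz : z ∈ ball 0 1) (n : ℕ) : h.distRatio (h.ψ^[n] z) = s ^ n * h.distRatio z := by
  induction n with
  | zero => simp
  | succ n ih =>
    rw [iterate_succ_apply', hs _ (h.bij.mapsTo.iterate n hz), ih]
    ring

/-- `s < 1` because the orbit of `0` tends to `a`, where `distRatio` vanishes. -/
theorem exists_distRatio_iterate_eq :
    ∃ s : ℝ, 0 ≤ s ∧ s < 1 ∧
      ∀ z ∈ ball 0 1, ∀ n : ℕ, h.distRatio (h.ψ^[n] z) = s ^ n * h.distRatio z := by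
  obtain ⟨s, hs0, hs⟩ := h.exists_distRatio_map_eq
  refine ⟨s, hs0, ?_, fun z hz => h.distRatio_iterate hs hz⟩
  have h0 : (0 : ℂ) ∈ ball 0 1 := mem_ball_self one_pos
  have hcont : ContinuousAt h.distRatio h.a :=
    (continuous_id.sub continuous_const).norm.continuousAt.div
      (continuous_id.sub continuous_const).norm.continuousAt
      (norm_ne_zero_iff.2 (sub_ne_zero.2 h.hab))
  have hlim := (hcont.tendsto.comp (h.attract 0 h0)).congr
    fun n => h.distRatio_iterate hs h0 n
  have hρ0 : h.distRatio 0 = 1 := by simp [distRatio, h.ha, h.hb]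
  have hρa : h.distRatio h.a = 0 := by simp [distRatio]
  rw [hρa] at hlim
  simp only [hρ0, mul_one] at hlim
  simpa [abs_of_nonneg hs0] using tendsto_pow_atTop_nhds_zero_iff.1 hlim

theorem distRatio_mem_Icc {δ δ' : ℝ} (hδ : 0 ≤ δ) (hδ' : 0 < δ') {z : ℂ} (hz : z ∈ ball 0 1)
    (hV : z ∉ ball h.a δ ∪ ball h.b δ') : h.distRatio z ∈ Icc (δ / 2) (2 / δ') := by
  simp only [mem_union, mem_ball, dist_eq_norm, not_or, not_lt] at hV
  have hle : ∀ {e : ℂ}, ‖e‖ = 1 → ‖z - e‖ ≤ 2 := fun he =>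
    (norm_sub_le z _).trans (by linarith [mem_ball_zero_iff.1 hz])
  have hb : 0 < ‖z - h.b‖ := hδ'.trans_le hV.2
  constructor
  · rw [distRatio, le_div_iff₀ hb]
    nlinarith [hle h.hb, hV.1]
  · rw [distRatio, div_le_div_iff₀ hb hδ']
    nlinarith [hle h.ha, norm_nonneg (z - h.a)]

theorem exists_card_le_of_forall_not_mem {δ δ' : ℝ} (hδ : 0 < δ) (hδ' : 0 < δ') :
    ∃ m : ℕ, ∀ z ∈ ball 0 1, ∀ S : Finset ℕ,
      (∀ j ∈ S, h.ψ^[j] z ∉ ball h.a δ ∪ ball h.b δ') → S.card ≤ m := by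
  obtain ⟨s, hs0, hs1, hs⟩ := h.exists_distRatio_iterate_eq
  obtain ⟨m, hm⟩ := exists_card_le_of_pow_mul_mem_Icc (β := 2 / δ') hs0 hs1 (half_pos hδ)
  refine ⟨m, fun z hz S hS => hm (h.distRatio z) S fun j hj => ?_⟩
  rw [← hs z hz]
  exact h.distRatio_mem_Icc hδ.le hδ' (h.bij.mapsTo.iterate j hz) (hS j hj)

end HypAuto

section IterProdSup

variable {α : Type*} {T : α → α} {f : α → ℝ} {X : Set α} {C : ℝ}

variable (T f X) in
def iterProdSup (n : ℕ) : ℝ := sSup ((fun z => ∏ j ∈ Finset.range n, f (T^[j] z)) '' X)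

theorem prod_iterate_le_pow (hT : MapsTo T X X) (hf0 : ∀ z ∈ X, 0 ≤ f z)
    (hfC : ∀ z ∈ X, f z ≤ C) {z : α} (hz : z ∈ X) (n : ℕ) :
    ∏ j ∈ Finset.range n, f (T^[j] z) ≤ C ^ n := by
  simpa using Finset.prod_le_prod (s := Finset.range n) (fun j _ => hf0 _ (hT.iterate j hz))
    fun j _ => hfC _ (hT.iterate j hz)

theorem prod_iterate_le_iterProdSup (hT : MapsTo T X X) (hf0 : ∀ z ∈ X, 0 ≤ f z)
    (hfC : ∀ z ∈ X, f z ≤ C) {z : α} (hz : z ∈ X) (n : ℕ) :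
    ∏ j ∈ Finset.range n, f (T^[j] z) ≤ iterProdSup T f X n :=
  le_csSup ⟨C ^ n, by rintro _ ⟨y, hy, rfl⟩; exact prod_iterate_le_pow hT hf0 hfC hy n⟩
    ⟨z, hz, rfl⟩

theorem iterProdSup_nonneg (hT : MapsTo T X X) (hf0 : ∀ z ∈ X, 0 ≤ f z) (n : ℕ) :
    0 ≤ iterProdSup T f X n :=
  Real.sSup_nonneg <| by
    rintro _ ⟨z, hz, rfl⟩
    exact Finset.prod_nonneg fun j _ => hf0 _ (hT.iterate j hz)

theorem pow_le_iterProdSup (hT : MapsTo T X X) (hX : X.Nonempty) {c : ℝ} (hc0 : 0 ≤ c)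
    (hc : ∀ z ∈ X, c ≤ f z) (hfC : ∀ z ∈ X, f z ≤ C) (n : ℕ) : c ^ n ≤ iterProdSup T f X n := by
  obtain ⟨z, hz⟩ := hX
  have hf0 : ∀ z ∈ X, 0 ≤ f z := fun z hz => hc0.trans (hc z hz)
  refine le_trans ?_ (prod_iterate_le_iterProdSup hT hf0 hfC hz n)
  simpa using Finset.prod_le_prod (s := Finset.range n) (fun j _ => hc0)
    fun j _ => hc _ (hT.iterate j hz)

theorem iterProdSup_add_le (hT : MapsTo T X X) (hf0 : ∀ z ∈ X, 0 ≤ f z)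
    (hfC : ∀ z ∈ X, f z ≤ C) (m n : ℕ) :
    iterProdSup T f X (m + n) ≤ iterProdSup T f X m * iterProdSup T f X n := by
  refine Real.sSup_le ?_ (mul_nonneg (iterProdSup_nonneg hT hf0 m) (iterProdSup_nonneg hT hf0 n))
  rintro _ ⟨z, hz, rfl⟩
  have hshift : ∀ j, T^[m + j] z = T^[j] (T^[m] z) := fun j => by
    rw [add_comm, iterate_add_apply]
  simp only [Finset.prod_range_add, hshift]
  exact mul_le_mul (prod_iterate_le_iterProdSup hT hf0 hfC hz m)
    (prod_iterate_le_iterProdSup hT hf0 hfC (hT.iterate m hz) n)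
    (Finset.prod_nonneg fun j _ => hf0 _ (hT.iterate _ (hT.iterate m hz)))
    (iterProdSup_nonneg hT hf0 m)

/-- Fekete's lemma, applied to the subadditive sequence `log (iterProdSup T f X n)`. -/
theorem exists_tendsto_iterProdSup_rpow (hT : MapsTo T X X) (hX : X.Nonempty) {c : ℝ}
    (hc0 : 0 < c) (hc : ∀ z ∈ X, c ≤ f z) (hfC : ∀ z ∈ X, f z ≤ C) :
    ∃ L, Tendsto (fun n : ℕ => iterProdSup T f X n ^ (1 / (n : ℝ))) atTop (𝓝 L) := by
  have hf0 : ∀ z ∈ X, 0 ≤ f z := fun z hz => hc0.le.trans (hc z hz)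
  have hpos : ∀ n, 0 < iterProdSup T f X n := fun n =>
    (pow_pos hc0 n).trans_le (pow_le_iterProdSup hT hX hc0.le hc hfC n)
  have hsub : Subadditive fun n => Real.log (iterProdSup T f X n) := fun m n => by
    rw [← Real.log_mul (hpos m).ne' (hpos n).ne']
    exact Real.log_le_log (hpos _) (iterProdSup_add_le hT hf0 hfC m n)
  have hbdd : BddBelow (Set.range fun n : ℕ => Real.log (iterProdSup T f X n) / n) := by
    refine ⟨min (Real.log c) 0, ?_⟩
    rintro _ ⟨n, rfl⟩
    rcases n.eq_zero_or_pos with rfl | hn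
    · simp
    rw [le_div_iff₀ (Nat.cast_pos.2 hn)]
    calc min (Real.log c) 0 * n ≤ Real.log c * n := by gcongr; exact min_le_left _ _
      _ = Real.log (c ^ n) := by rw [Real.log_pow, mul_comm]
      _ ≤ _ := Real.log_le_log (pow_pos hc0 n) (pow_le_iterProdSup hT hX hc0.le hc hfC n)
  refine ⟨Real.exp hsub.lim, ((Real.continuous_exp.tendsto _).comp (hsub.tendsto_lim hbdd)).congr'
    ?_⟩
  filter_upwards [eventually_ne_atTop 0] with n hn
  rw [comp_apply, Real.rpow_def_of_pos (hpos n), mul_one_div]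

/-- Each step of the orbit outside `V` costs at most a factor `C / t` on top of `t`. -/
theorem iterProdSup_le_mul_pow (hT : MapsTo T X X) (hf0 : ∀ z ∈ X, 0 ≤ f z)
    (hfC : ∀ z ∈ X, f z ≤ C) {t : ℝ} (ht : 0 < t) (htC : t ≤ C) {V : Set α}
    (hV : ∀ z ∈ X, z ∈ V → f z ≤ t) {m : ℕ}
    (hm : ∀ z ∈ X, ∀ S : Finset ℕ, (∀ j ∈ S, T^[j] z ∉ V) → S.card ≤ m) (n : ℕ) :
    iterProdSup T f X n ≤ (C / t) ^ m * t ^ n := by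
  classical
  have hK : 1 ≤ C / t := (one_le_div ht).2 htC
  refine Real.sSup_le ?_ (by positivity)
  rintro _ ⟨z, hz, rfl⟩
  calc ∏ j ∈ Finset.range n, f (T^[j] z)
      ≤ ∏ j ∈ Finset.range n, t * (if T^[j] z ∉ V then C / t else 1) := by
        refine Finset.prod_le_prod (fun j _ => hf0 _ (hT.iterate j hz)) fun j _ => ?_
        split_ifs with hj
        · rw [mul_one]
          exact hV _ (hT.iterate j hz) hj
        · rw [mul_div_cancel₀ _ ht.ne']
          exact hfC _ (hT.iterate j hz)
    _ = t ^ n * (C / t) ^ #{j ∈ Finset.range n | T^[j] z ∉ V} := by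
        rw [Finset.prod_mul_distrib, ← Finset.prod_filter, Finset.prod_const, Finset.prod_const,
          Finset.card_range]
    _ ≤ (C / t) ^ m * t ^ n := by
        rw [mul_comm]
        gcongr
        exact hm z hz _ fun j hj => (Finset.mem_filter.1 hj).2

end IterProdSup

theorem le_of_tendsto_rpow_of_le_mul_pow {a : ℕ → ℝ} {L K t : ℝ}
    (hL : Tendsto (fun n : ℕ => a n ^ (1 / (n : ℝ))) atTop (𝓝 L)) (ha : ∀ n, 0 ≤ a n)
    (hK : 0 < K) (ht : 0 ≤ t) (hle : ∀ n, a n ≤ K * t ^ n) : L ≤ t := by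
  have hKlim : Tendsto (fun n : ℕ => K ^ (1 / (n : ℝ)) * t) atTop (𝓝 t) := by
    simpa using (tendsto_const_nhds.rpow tendsto_one_div_atTop_nhds_zero_nat
      (Or.inl hK.ne')).mul_const t
  refine le_of_tendsto_of_tendsto hL hKlim ?_
  filter_upwards [eventually_ne_atTop 0] with n hn
  calc a n ^ (1 / (n : ℝ)) ≤ (K * t ^ n) ^ (1 / (n : ℝ)) :=
        Real.rpow_le_rpow (ha n) (hle n) (by positivity)
    _ = K ^ (1 / (n : ℝ)) * t := by
      rw [Real.mul_rpow hK.le (by positivity), ← Real.rpow_natCast, ← Real.rpow_mul ht,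
        mul_one_div_cancel (Nat.cast_ne_zero.2 hn), Real.rpow_one]

section Limsup

variable {β : Type*} [TopologicalSpace β] {f : β → ℝ} {X : Set β} {e : β} {C : ℝ}

theorem le_limsup_nhdsWithin (he : e ∈ closure X) {c : ℝ} (hc : ∀ z ∈ X, c ≤ f z)
    (hC : ∀ z ∈ X, f z ≤ C) : c ≤ limsup f (𝓝[X] e) :=
  haveI := mem_closure_iff_nhdsWithin_neBot.1 he
  le_limsup_of_frequently_le (eventually_nhdsWithin_of_forall hc).frequently
    (isBoundedUnder_of_eventually_le (eventually_nhdsWithin_of_forall hC))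

theorem eventually_lt_of_limsup_nhdsWithin_lt (hC : ∀ z ∈ X, f z ≤ C) {t : ℝ}
    (ht : limsup f (𝓝[X] e) < t) : ∀ᶠ z in 𝓝 e, z ∈ X → f z < t :=
  eventually_nhdsWithin_iff.1 <| eventually_lt_of_limsup_lt ht
    (isBoundedUnder_of_eventually_le (eventually_nhdsWithin_of_forall hC))

end Limsup

theorem sup_iterated_weight_limit_general (h : HypAuto)
    (u : ℂ → ℂ)
    (hubd : ∃ C : ℝ, ∀ z ∈ ball (0:ℂ) 1, ‖u z‖ ≤ C)
    (huaway : ∃ c : ℝ, 0 < c ∧ ∀ z ∈ ball (0:ℂ) 1, c ≤ ‖u z‖) :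
    ∃ L : ℝ,
      Tendsto
        (fun n : ℕ =>
          (sSup ((fun z => ‖
            (∏ j ∈ Finset.range n, u (h.ψ^[j] z))‖) '' ball (0:ℂ) 1)) ^ (1 / (n:ℝ)))
        atTop (nhds L) ∧
      L ≤ max (limsup (fun z => ‖u z‖) (nhdsWithin h.a (ball (0:ℂ) 1)))
            (limsup (fun z => ‖u z‖) (nhdsWithin h.b (ball (0:ℂ) 1))) := by
  obtain ⟨C, hC⟩ := hubd
  obtain ⟨c, hc0, hc⟩ := huaway
  have hT := h.bij.mapsTo
  have hf0 : ∀ z ∈ ball (0 : ℂ) 1, 0 ≤ ‖u z‖ := fun z _ => norm_nonneg _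
  simp only [norm_prod]
  obtain ⟨L, hL⟩ := exists_tendsto_iterProdSup_rpow hT ⟨0, mem_ball_self one_pos⟩ hc0 hc hC
  refine ⟨L, hL, le_of_forall_pos_le_add fun ε hε => ?_⟩
  set A := limsup (fun z => ‖u z‖) (𝓝[ball 0 1] h.a)
  set B := limsup (fun z => ‖u z‖) (𝓝[ball 0 1] h.b)
  have hA : 0 ≤ A := le_limsup_nhdsWithin (by
    rw [closure_ball 0 one_ne_zero, mem_closedBall_zero_iff, h.ha]) hf0 hC
  have ht : 0 < max A B + ε := by positivity
  obtain ⟨δ, hδ, hδa⟩ := Metric.eventually_nhds_iff_ball.1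
    (eventually_lt_of_limsup_nhdsWithin_lt hC (lt_add_of_le_of_pos (le_max_left A B) hε))
  obtain ⟨δ', hδ', hδb⟩ := Metric.eventually_nhds_iff_ball.1
    (eventually_lt_of_limsup_nhdsWithin_lt hC (lt_add_of_le_of_pos (le_max_right A B) hε))
  obtain ⟨m, hm⟩ := h.exists_card_le_of_forall_not_mem hδ hδ'
  refine le_of_tendsto_rpow_of_le_mul_pow hL (iterProdSup_nonneg hT hf0) (by positivity) ht.le
    (iterProdSup_le_mul_pow hT hf0 (fun z hz => (hC z hz).trans (le_max_left _ _)) ht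
      (le_max_right _ _) (fun z hz hV => ?_) hm)
  rcases hV with hV | hV
  exacts [(hδa z hV hz).le, (hδb z hV hz).le]

/-- With `u_n = ∏_{j=0}^{n-1} u∘ψ_j`, the limit of `(sup_𝔻 |u_n|)^{1/n}` exists
and is at most `max{A⁺, B⁺}`, where `A⁺ = limsup_{𝔻∋z→a} |u z|` and
`B⁺ = limsup_{𝔻∋z→b} |u z|`. -/
theorem sup_iterated_weight_limit (h : HypAuto)
    (u : ℂ → ℂ) (hu : DifferentiableOn ℂ u (ball (0:ℂ) 1))
    (hubd : ∃ C : ℝ, ∀ z ∈ ball (0:ℂ) 1, ‖u z‖ ≤ C)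
    (huaway : ∃ c : ℝ, 0 < c ∧ ∀ z ∈ ball (0:ℂ) 1, c ≤ ‖u z‖) :
    ∃ L : ℝ,
      Tendsto
        (fun n : ℕ =>
          (sSup ((fun z => ‖
            (∏ j ∈ Finset.range n, u (h.ψ^[j] z))‖) '' ball (0:ℂ) 1)) ^ (1 / (n:ℝ)))
        atTop (nhds L) ∧
      L ≤ max (limsup (fun z => ‖u z‖) (nhdsWithin h.a (ball (0:ℂ) 1)))
            (limsup (fun z => ‖u z‖) (nhdsWithin h.b (ball (0:ℂ) 1))) :=
  sup_iterated_weight_limit_general h u hubd huaway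
end
end
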